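/- If L ∩ Ker ω = {0}, where L is a k-dimensional subspace of V and ω ≠ 0 is a decomposable m-form with k ≤ m, then the subspace L + Ker ω has codimension m − k in V, and there exist vectors ξ₁, …, ξ_{m−k} ∈ V linearly independent modulo L + Ker ω such that ω(ξ₁,…,ξ_{m−k}, f₁,…,f_k) ≠ 0 for any basis f₁,…,f_k of L. -/

import Mathlib

/-!
Write `P = (φ₁, …, φ_m) : V → ℝᵐ`, so that `ω(v₁, …, v_m) = det (P v₁, …, P v_m)`. Since `ω ≠ 0`,
`P` is surjective and `Ker ω = ker P`. As `L ∩ ker P = 0`, `P` maps `L` isomorphically onto a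
`k`-dimensional subspace `P L` of `ℝᵐ`; choose a complement `W` of it, of dimension `m - k`, and
lift a basis of `W` along `P` to vectors `ξᵢ`. Then `V / (L + ker P) ≅ ℝᵐ / P L ≅ W`, the `ξᵢ` are
independent modulo `L + ker P` because `W ∩ P L = 0`, and for every spanning family `f` of `L` the
vectors `P ξᵢ, P fⱼ` span `W + P L = ℝᵐ`, so their determinant does not vanish.
-/

open Module

/-- The wedge product `φ₁ ∧ … ∧ φ_m` of `m` linear functionals, as an alternating `m`-form. -/
noncomputable def wedgeF {V : Type*} [AddCommGroup V] [Module ℝ V] {m : ℕ}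
    (φ : Fin m → (V →ₗ[ℝ] ℝ)) : AlternatingMap ℝ V ℝ (Fin m) :=
  Matrix.detRowAlternating.compLinearMap (LinearMap.pi φ)

/-- The kernel of an (alternating) `m`-form `f`, as a set. -/
def kerSetF {V : Type*} [AddCommGroup V] [Module ℝ V] {m : ℕ}
    (f : (Fin m → V) → ℝ) : Set V :=
  {v | ∀ w : Fin m → V, (∃ i, w i = v) → f w = 0}

theorem Fin.range_append {α : Type*} {m n : ℕ} (u : Fin m → α) (v : Fin n → α) :
    Set.range (Fin.append u v) = Set.range u ∪ Set.range v := by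
  rw [← Set.Sum.elim_range, ← Fin.append_comp_sumElim]
  exact (finSumFinEquiv.surjective.range_comp _).symm

theorem Matrix.det_one_updateRow {n R : Type*} [Fintype n] [DecidableEq n] [CommRing R]
    (j : n) (b : n → R) : ((1 : Matrix n n R).updateRow j b).det = b j := by
  rw [← Matrix.cramer_transpose_apply, Matrix.transpose_one, Matrix.cramer_one]
  rfl

section LinearAlgebra

variable {𝕜 V E : Type*} [Field 𝕜] [AddCommGroup V] [Module 𝕜 V] [AddCommGroup E] [Module 𝕜 E]
  {P : V →ₗ[𝕜] E}

theorem finrank_map_of_disjoint_ker {L : Submodule 𝕜 V} (h : Disjoint L (LinearMap.ker P)) :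
    finrank 𝕜 (L.map P) = finrank 𝕜 L := by
  rw [← LinearMap.range_domRestrict]
  exact LinearMap.finrank_range_of_inj (LinearMap.injective_domRestrict_iff.mpr h)

theorem finrank_quotient_sup_ker_eq_of_isCompl (hP : Function.Surjective P)
    {L : Submodule 𝕜 V} {W : Submodule 𝕜 E} (hW : IsCompl (L.map P) W) :
    finrank 𝕜 (V ⧸ (L ⊔ LinearMap.ker P)) = finrank 𝕜 W := by
  let Q := (L.map P).mkQ ∘ₗ P
  have hQ : L ⊔ LinearMap.ker P = LinearMap.ker Q := by
    rw [LinearMap.ker_comp, Submodule.ker_mkQ, Submodule.comap_map_eq]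
  exact ((Submodule.quotEquivOfEq _ _ hQ).trans <|
    (Q.quotKerEquivOfSurjective ((L.map P).mkQ_surjective.comp hP)).trans <|
      Submodule.quotientEquivOfIsCompl _ _ hW).finrank_eq

theorem exists_linearIndependent_map_span_eq (hP : Function.Surjective P)
    (W : Submodule 𝕜 E) [FiniteDimensional 𝕜 W] {n : ℕ} (hn : finrank 𝕜 W = n) :
    ∃ ξ : Fin n → V, LinearIndependent 𝕜 (P ∘ ξ) ∧ (Submodule.span 𝕜 (Set.range ξ)).map P = W := by
  let b := finBasisOfFinrankEq 𝕜 W hn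
  let ξ := fun i => Function.surjInv hP (b i : E)
  have hPξ : P ∘ ξ = W.subtype ∘ b := funext fun i => Function.surjInv_eq hP _
  refine ⟨ξ, ?_, ?_⟩
  · rw [hPξ]
    exact b.linearIndependent.map' W.subtype W.ker_subtype
  · rw [Submodule.map_span, ← Set.range_comp, hPξ, Set.range_comp, ← Submodule.map_span,
      b.span_eq, Submodule.map_top, Submodule.range_subtype]

theorem eq_zero_of_sum_smul_mem_sup_ker {ι : Type*} [Fintype ι] {L : Submodule 𝕜 V}
    {ξ : ι → V} (hli : LinearIndependent 𝕜 (P ∘ ξ))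
    (hdisj : Disjoint (L.map P) ((Submodule.span 𝕜 (Set.range ξ)).map P))
    {c : ι → 𝕜} (hc : ∑ i, c i • ξ i ∈ L ⊔ LinearMap.ker P) : c = 0 := by
  rw [← Submodule.comap_map_eq, Submodule.mem_comap] at hc
  have hspan : ∑ i, c i • ξ i ∈ Submodule.span 𝕜 (Set.range ξ) :=
    Submodule.sum_smul_mem _ c fun i _ => Submodule.subset_span ⟨i, rfl⟩
  have hzero := Submodule.disjoint_def.mp hdisj _ hc (Submodule.mem_map_of_mem hspan)
  simp only [map_sum, map_smul] at hzero
  exact funext (Fintype.linearIndependent_iff.mp hli c hzero)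

end LinearAlgebra

section Wedge

variable {V : Type*} [AddCommGroup V] [Module ℝ V] {m : ℕ} {φ : Fin m → (V →ₗ[ℝ] ℝ)}

theorem wedgeF_apply (w : Fin m → V) :
    wedgeF φ w = (Matrix.of fun i => LinearMap.pi φ (w i)).det :=
  rfl

theorem wedgeF_ne_zero_iff_span_eq_top (w : Fin m → V) :
    wedgeF φ w ≠ 0 ↔ Submodule.span ℝ (Set.range fun i => LinearMap.pi φ (w i)) = ⊤ := by
  rw [wedgeF_apply, ← isUnit_iff_ne_zero, ← Matrix.isUnit_iff_isUnit_det,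
    ← Matrix.linearIndependent_rows_iff_isUnit]
  exact ⟨fun h => h.span_eq_top_of_card_eq_finrank' (by simp),
    fun h => linearIndependent_of_top_le_span_of_card_eq_finrank h.ge (by simp)⟩

theorem surjective_pi_of_wedgeF_ne_zero (hω : wedgeF φ ≠ 0) :
    Function.Surjective (LinearMap.pi φ) := by
  obtain ⟨w, hw⟩ : ∃ w, wedgeF φ w ≠ 0 := by
    by_contra! h
    exact hω (AlternatingMap.ext h)
  rw [← LinearMap.range_eq_top, eq_top_iff, ← (wedgeF_ne_zero_iff_span_eq_top w).mp hw,
    Submodule.span_le]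
  rintro _ ⟨i, rfl⟩
  exact LinearMap.mem_range_self _ _

theorem kerSetF_wedgeF (hP : Function.Surjective (LinearMap.pi φ)) :
    kerSetF (wedgeF φ) = LinearMap.ker (LinearMap.pi φ) := by
  ext v
  constructor
  · intro hv
    by_contra hPv
    obtain ⟨j, hj⟩ := Function.ne_iff.mp hPv
    -- Put `v` in slot `j` of a lift of the standard basis: then `ω` evaluates to `(P v)_j ≠ 0`.
    let e := fun i => Function.surjInv hP (Pi.single i 1 : Fin m → ℝ)
    have he (i t : Fin m) : φ t (e i) = (Pi.single i 1 : Fin m → ℝ) t :=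
      congrFun (Function.surjInv_eq hP (Pi.single i 1)) t
    have hrows : (Matrix.of fun i => LinearMap.pi φ (Function.update e j v i)) =
        (1 : Matrix (Fin m) (Fin m) ℝ).updateRow j (LinearMap.pi φ v) := by
      ext i t
      rcases eq_or_ne i j with rfl | hij
      · simp
      · simp [hij, he, Matrix.one_apply, Pi.single_apply, eq_comm]
    have hzero := hv (Function.update e j v) ⟨j, by simp⟩
    rw [wedgeF_apply, hrows, Matrix.det_one_updateRow] at hzero
    exact hj hzero
  · rintro hv w ⟨i, rfl⟩
    rw [wedgeF_apply]
    exact Matrix.det_eq_zero_of_row_eq_zero i fun t => congrFun (LinearMap.mem_ker.mp hv) t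

end Wedge

theorem stmt9_general {V : Type*} [AddCommGroup V] [Module ℝ V]
    {k r : ℕ} (φ : Fin (r + k) → (V →ₗ[ℝ] ℝ)) (hω : wedgeF φ ≠ 0)
    (L : Submodule ℝ V) (hL : finrank ℝ L = k)
    (K : Submodule ℝ V) (hK : (K : Set V) = kerSetF (⇑(wedgeF φ)))
    (hcap : L ⊓ K = ⊥) :
    finrank ℝ (V ⧸ (L ⊔ K)) = r ∧
    ∃ ξ : Fin r → V,
      (∀ c : Fin r → ℝ, (∑ i, c i • ξ i) ∈ L ⊔ K → c = 0) ∧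
      ∀ f : Fin k → V, LinearIndependent ℝ f →
        Submodule.span ℝ (Set.range f) = L →
        wedgeF φ (Fin.append ξ f) ≠ 0 := by
  set P := LinearMap.pi φ
  have hP : Function.Surjective P := surjective_pi_of_wedgeF_ne_zero hω
  obtain rfl : K = LinearMap.ker P := SetLike.coe_injective (hK.trans (kerSetF_wedgeF hP))
  obtain ⟨W, hW⟩ := (L.map P).exists_isCompl
  have hWr : finrank ℝ W = r := by
    have := Submodule.finrank_add_eq_of_isCompl hW
    rw [finrank_map_of_disjoint_ker (disjoint_iff.mpr hcap), hL, finrank_fin_fun] at this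
    omega
  obtain ⟨ξ, hli, hξW⟩ := exists_linearIndependent_map_span_eq hP W hWr
  refine ⟨(finrank_quotient_sup_ker_eq_of_isCompl hP hW).trans hWr, ξ,
    fun c hc => eq_zero_of_sum_smul_mem_sup_ker hli (hξW ▸ hW.disjoint) hc, ?_⟩
  intro f _ hf
  rw [wedgeF_ne_zero_iff_span_eq_top]
  change Submodule.span ℝ (Set.range (P ∘ Fin.append ξ f)) = ⊤
  rw [Set.range_comp, ← Submodule.map_span, Fin.range_append,
    Submodule.span_union, Submodule.map_sup, hξW, hf, sup_comm, hW.sup_eq_top]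

/-- If `L ∩ Ker ω = {0}`, where `L ⊆ V` is a `k`-dimensional subspace and
`ω ≠ 0` a decomposable `m`-form (`m = r + k`, so `k ≤ m`), then `L + Ker ω` has
codimension `m − k = r` in `V`, and there exist `ξ₁,…,ξ_r ∈ V` linearly independent
modulo `L + Ker ω` such that `ω(ξ₁,…,ξ_r,f₁,…,f_k) ≠ 0` for any basis `f₁,…,f_k` of `L`. -/
theorem stmt9 {V : Type*} [AddCommGroup V] [Module ℝ V] [FiniteDimensional ℝ V]
    {k r : ℕ} (φ : Fin (r + k) → (V →ₗ[ℝ] ℝ)) (hω : wedgeF φ ≠ 0)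
    (L : Submodule ℝ V) (hL : finrank ℝ L = k)
    (K : Submodule ℝ V) (hK : (K : Set V) = kerSetF (⇑(wedgeF φ)))
    (hcap : L ⊓ K = ⊥) :
    finrank ℝ (V ⧸ (L ⊔ K)) = r ∧
    ∃ ξ : Fin r → V,
      (∀ c : Fin r → ℝ, (∑ i, c i • ξ i) ∈ L ⊔ K → c = 0) ∧
      ∀ f : Fin k → V, LinearIndependent ℝ f →
        Submodule.span ℝ (Set.range f) = L →
        wedgeF φ (Fin.append ξ f) ≠ 0 :=
  stmt9_general φ hω L hL K hK hcap
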